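/- (Degeneration of mixed-norm Hölder under independence.) Let $0<p\le\infty$ and let $g_1,g_2,g_3,g_4:\mathbb{R}^4\to\mathbb{C}$ be measurable such that for each $j$, $g_j$ does not depend on the variable $x_j$, i.e. $g_j(x)=f_j(P_j x)$ where $P_j:\mathbb{R}^4\to\mathbb{R}^3$ forgets the $x_j$ coordinate. Then $\|g_1 g_2 g_3 g_4\|_{L^p(\mathbb{R}^4)} \le \prod_{j=1}^4 \|f_j\|_{L^{3p}(\mathbb{R}^3)}$. -/
import Mathlib


open MeasureTheory ENNReal

lemma holder3 {α : Type*} [MeasurableSpace α] (μ : Measure α) {f g h : α → ℝ≥0∞}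
    (hf : Measurable f) (hg : Measurable g) (hh : Measurable h) :
    ∫⁻ a, f a ^ (3⁻¹ : ℝ) * g a ^ (3⁻¹ : ℝ) * h a ^ (3⁻¹ : ℝ) ∂μ ≤
      (∫⁻ a, f a ∂μ) ^ (3⁻¹ : ℝ) * (∫⁻ a, g a ∂μ) ^ (3⁻¹ : ℝ) *
        (∫⁻ a, h a ∂μ) ^ (3⁻¹ : ℝ) := by
  have := ENNReal.lintegral_prod_norm_pow_le (μ := μ) Finset.univ
    (f := ![f, g, h]) (p := fun _ => (3⁻¹ : ℝ))
    (fun i _ => by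
      fin_cases i
      exacts [hf.aemeasurable, hg.aemeasurable, hh.aemeasurable])
    (by norm_num [Fin.sum_univ_three]) (fun i _ => by norm_num)
  simpa [Fin.prod_univ_three] using this

lemma lw4 {F₁ F₂ F₃ F₄ : ℝ × ℝ × ℝ → ℝ≥0∞}
    (m₁ : Measurable F₁) (m₂ : Measurable F₂) (m₃ : Measurable F₃) (m₄ : Measurable F₄) :
    ∫⁻ x : ℝ × ℝ × ℝ × ℝ,
        F₁ (x.2.1, x.2.2.1, x.2.2.2) ^ (3⁻¹ : ℝ) * F₂ (x.1, x.2.2.1, x.2.2.2) ^ (3⁻¹ : ℝ) *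
          F₃ (x.1, x.2.1, x.2.2.2) ^ (3⁻¹ : ℝ) * F₄ (x.1, x.2.1, x.2.2.1) ^ (3⁻¹ : ℝ)
      ≤ (∫⁻ y, F₁ y) ^ (3⁻¹ : ℝ) * (∫⁻ y, F₂ y) ^ (3⁻¹ : ℝ) * (∫⁻ y, F₃ y) ^ (3⁻¹ : ℝ) *
          (∫⁻ y, F₄ y) ^ (3⁻¹ : ℝ) := by
  have hA₁ : Measurable fun q : ℝ × ℝ => ∫⁻ d, F₁ (q.1, q.2, d) :=
    Measurable.lintegral_prod_right' (f := fun z : (ℝ × ℝ) × ℝ => F₁ (z.1.1, z.1.2, z.2))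
      (by fun_prop)
  have hA₂ : Measurable fun q : ℝ × ℝ => ∫⁻ d, F₂ (q.1, q.2, d) :=
    Measurable.lintegral_prod_right' (f := fun z : (ℝ × ℝ) × ℝ => F₂ (z.1.1, z.1.2, z.2))
      (by fun_prop)
  have hA₃ : Measurable fun q : ℝ × ℝ => ∫⁻ d, F₃ (q.1, q.2, d) :=
    Measurable.lintegral_prod_right' (f := fun z : (ℝ × ℝ) × ℝ => F₃ (z.1.1, z.1.2, z.2))
      (by fun_prop)
  have hB₄ : Measurable fun q : ℝ × ℝ => ∫⁻ c, F₄ (q.1, q.2, c) :=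
    Measurable.lintegral_prod_right' (f := fun z : (ℝ × ℝ) × ℝ => F₄ (z.1.1, z.1.2, z.2))
      (by fun_prop)
  have hB₁ : Measurable fun b : ℝ => ∫⁻ c, ∫⁻ d, F₁ (b, c, d) :=
    Measurable.lintegral_prod_right' (f := fun q : ℝ × ℝ => ∫⁻ d, F₁ (q.1, q.2, d)) hA₁
  have hB₂ : Measurable fun a : ℝ => ∫⁻ c, ∫⁻ d, F₂ (a, c, d) :=
    Measurable.lintegral_prod_right' (f := fun q : ℝ × ℝ => ∫⁻ d, F₂ (q.1, q.2, d)) hA₂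
  have hC₃ : Measurable fun a : ℝ => ∫⁻ b, ∫⁻ d, F₃ (a, b, d) :=
    Measurable.lintegral_prod_right' (f := fun q : ℝ × ℝ => ∫⁻ d, F₃ (q.1, q.2, d)) hA₃
  have hC₄ : Measurable fun a : ℝ => ∫⁻ b, ∫⁻ c, F₄ (a, b, c) :=
    Measurable.lintegral_prod_right' (f := fun q : ℝ × ℝ => ∫⁻ c, F₄ (q.1, q.2, c)) hB₄
  calc
    ∫⁻ x : ℝ × ℝ × ℝ × ℝ,
        F₁ (x.2.1, x.2.2.1, x.2.2.2) ^ (3⁻¹ : ℝ) * F₂ (x.1, x.2.2.1, x.2.2.2) ^ (3⁻¹ : ℝ) *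
          F₃ (x.1, x.2.1, x.2.2.2) ^ (3⁻¹ : ℝ) * F₄ (x.1, x.2.1, x.2.2.1) ^ (3⁻¹ : ℝ)
      = ∫⁻ a, ∫⁻ b, ∫⁻ c, ∫⁻ d,
          F₁ (b, c, d) ^ (3⁻¹ : ℝ) * F₂ (a, c, d) ^ (3⁻¹ : ℝ) *
            F₃ (a, b, d) ^ (3⁻¹ : ℝ) * F₄ (a, b, c) ^ (3⁻¹ : ℝ) := by
        rw [Measure.volume_eq_prod, lintegral_prod _ (by fun_prop)]
        refine lintegral_congr fun a => ?_
        rw [Measure.volume_eq_prod, lintegral_prod _ (by fun_prop)]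
        refine lintegral_congr fun b => ?_
        rw [Measure.volume_eq_prod, lintegral_prod _ (by fun_prop)]
    _ ≤ ∫⁻ a, ∫⁻ b, ∫⁻ c,
          (∫⁻ d, F₁ (b, c, d)) ^ (3⁻¹ : ℝ) * (∫⁻ d, F₂ (a, c, d)) ^ (3⁻¹ : ℝ) *
            (∫⁻ d, F₃ (a, b, d)) ^ (3⁻¹ : ℝ) * F₄ (a, b, c) ^ (3⁻¹ : ℝ) := by
        refine lintegral_mono fun a => lintegral_mono fun b => lintegral_mono fun c => ?_
        rw [lintegral_mul_const _ (by fun_prop)]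
        exact mul_le_mul_left (holder3 volume (by fun_prop) (by fun_prop) (by fun_prop)) _
    _ ≤ ∫⁻ a, ∫⁻ b,
          (∫⁻ c, ∫⁻ d, F₁ (b, c, d)) ^ (3⁻¹ : ℝ) * (∫⁻ c, ∫⁻ d, F₂ (a, c, d)) ^ (3⁻¹ : ℝ) *
            (∫⁻ d, F₃ (a, b, d)) ^ (3⁻¹ : ℝ) * (∫⁻ c, F₄ (a, b, c)) ^ (3⁻¹ : ℝ) := by
        refine lintegral_mono fun a => lintegral_mono fun b => ?_
        calc
          ∫⁻ c, (∫⁻ d, F₁ (b, c, d)) ^ (3⁻¹ : ℝ) * (∫⁻ d, F₂ (a, c, d)) ^ (3⁻¹ : ℝ) *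
              (∫⁻ d, F₃ (a, b, d)) ^ (3⁻¹ : ℝ) * F₄ (a, b, c) ^ (3⁻¹ : ℝ)
            = ∫⁻ c, (∫⁻ d, F₁ (b, c, d)) ^ (3⁻¹ : ℝ) * (∫⁻ d, F₂ (a, c, d)) ^ (3⁻¹ : ℝ) *
                F₄ (a, b, c) ^ (3⁻¹ : ℝ) * (∫⁻ d, F₃ (a, b, d)) ^ (3⁻¹ : ℝ) := by
              refine lintegral_congr fun c => by ring
          _ = (∫⁻ c, (∫⁻ d, F₁ (b, c, d)) ^ (3⁻¹ : ℝ) * (∫⁻ d, F₂ (a, c, d)) ^ (3⁻¹ : ℝ) *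
                F₄ (a, b, c) ^ (3⁻¹ : ℝ)) * (∫⁻ d, F₃ (a, b, d)) ^ (3⁻¹ : ℝ) := by
              rw [lintegral_mul_const]
              exact Measurable.mul
                (Measurable.mul
                  ((hA₁.comp (measurable_const.prodMk measurable_id)).pow_const _)
                  ((hA₂.comp (measurable_const.prodMk measurable_id)).pow_const _))
                ((m₄.comp (by fun_prop)).pow_const _)
          _ ≤ ((∫⁻ c, ∫⁻ d, F₁ (b, c, d)) ^ (3⁻¹ : ℝ) * (∫⁻ c, ∫⁻ d, F₂ (a, c, d)) ^ (3⁻¹ : ℝ) *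
                (∫⁻ c, F₄ (a, b, c)) ^ (3⁻¹ : ℝ)) * (∫⁻ d, F₃ (a, b, d)) ^ (3⁻¹ : ℝ) := by
              refine mul_le_mul_left (holder3 volume ?_ ?_ ?_) _
              · exact hA₁.comp (measurable_const.prodMk measurable_id)
              · exact hA₂.comp (measurable_const.prodMk measurable_id)
              · exact m₄.comp (by fun_prop)
          _ = (∫⁻ c, ∫⁻ d, F₁ (b, c, d)) ^ (3⁻¹ : ℝ) * (∫⁻ c, ∫⁻ d, F₂ (a, c, d)) ^ (3⁻¹ : ℝ) *
                (∫⁻ d, F₃ (a, b, d)) ^ (3⁻¹ : ℝ) * (∫⁻ c, F₄ (a, b, c)) ^ (3⁻¹ : ℝ) := by ring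
    _ ≤ ∫⁻ a,
          (∫⁻ b, ∫⁻ c, ∫⁻ d, F₁ (b, c, d)) ^ (3⁻¹ : ℝ) * (∫⁻ c, ∫⁻ d, F₂ (a, c, d)) ^ (3⁻¹ : ℝ) *
            (∫⁻ b, ∫⁻ d, F₃ (a, b, d)) ^ (3⁻¹ : ℝ) * (∫⁻ b, ∫⁻ c, F₄ (a, b, c)) ^ (3⁻¹ : ℝ) := by
        refine lintegral_mono fun a => ?_
        calc
          ∫⁻ b, (∫⁻ c, ∫⁻ d, F₁ (b, c, d)) ^ (3⁻¹ : ℝ) * (∫⁻ c, ∫⁻ d, F₂ (a, c, d)) ^ (3⁻¹ : ℝ) *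
              (∫⁻ d, F₃ (a, b, d)) ^ (3⁻¹ : ℝ) * (∫⁻ c, F₄ (a, b, c)) ^ (3⁻¹ : ℝ)
            = ∫⁻ b, (∫⁻ c, ∫⁻ d, F₁ (b, c, d)) ^ (3⁻¹ : ℝ) * (∫⁻ d, F₃ (a, b, d)) ^ (3⁻¹ : ℝ) *
                (∫⁻ c, F₄ (a, b, c)) ^ (3⁻¹ : ℝ) * (∫⁻ c, ∫⁻ d, F₂ (a, c, d)) ^ (3⁻¹ : ℝ) := by
              refine lintegral_congr fun b => by ring
          _ = (∫⁻ b, (∫⁻ c, ∫⁻ d, F₁ (b, c, d)) ^ (3⁻¹ : ℝ) * (∫⁻ d, F₃ (a, b, d)) ^ (3⁻¹ : ℝ) *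
                (∫⁻ c, F₄ (a, b, c)) ^ (3⁻¹ : ℝ)) * (∫⁻ c, ∫⁻ d, F₂ (a, c, d)) ^ (3⁻¹ : ℝ) := by
              rw [lintegral_mul_const]
              exact Measurable.mul
                (Measurable.mul (hB₁.pow_const _)
                  ((hA₃.comp (measurable_const.prodMk measurable_id)).pow_const _))
                ((hB₄.comp (measurable_const.prodMk measurable_id)).pow_const _)
          _ ≤ ((∫⁻ b, ∫⁻ c, ∫⁻ d, F₁ (b, c, d)) ^ (3⁻¹ : ℝ) *
                (∫⁻ b, ∫⁻ d, F₃ (a, b, d)) ^ (3⁻¹ : ℝ) *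
                (∫⁻ b, ∫⁻ c, F₄ (a, b, c)) ^ (3⁻¹ : ℝ)) *
                (∫⁻ c, ∫⁻ d, F₂ (a, c, d)) ^ (3⁻¹ : ℝ) := by
              refine mul_le_mul_left (holder3 volume hB₁ ?_ ?_) _
              · exact hA₃.comp (measurable_const.prodMk measurable_id)
              · exact hB₄.comp (measurable_const.prodMk measurable_id)
          _ = (∫⁻ b, ∫⁻ c, ∫⁻ d, F₁ (b, c, d)) ^ (3⁻¹ : ℝ) *
                (∫⁻ c, ∫⁻ d, F₂ (a, c, d)) ^ (3⁻¹ : ℝ) *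
                (∫⁻ b, ∫⁻ d, F₃ (a, b, d)) ^ (3⁻¹ : ℝ) *
                (∫⁻ b, ∫⁻ c, F₄ (a, b, c)) ^ (3⁻¹ : ℝ) := by ring
    _ ≤ (∫⁻ b, ∫⁻ c, ∫⁻ d, F₁ (b, c, d)) ^ (3⁻¹ : ℝ) *
          (∫⁻ a, ∫⁻ c, ∫⁻ d, F₂ (a, c, d)) ^ (3⁻¹ : ℝ) *
          (∫⁻ a, ∫⁻ b, ∫⁻ d, F₃ (a, b, d)) ^ (3⁻¹ : ℝ) *
          (∫⁻ a, ∫⁻ b, ∫⁻ c, F₄ (a, b, c)) ^ (3⁻¹ : ℝ) := by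
        calc
          ∫⁻ a, (∫⁻ b, ∫⁻ c, ∫⁻ d, F₁ (b, c, d)) ^ (3⁻¹ : ℝ) *
              (∫⁻ c, ∫⁻ d, F₂ (a, c, d)) ^ (3⁻¹ : ℝ) * (∫⁻ b, ∫⁻ d, F₃ (a, b, d)) ^ (3⁻¹ : ℝ) *
              (∫⁻ b, ∫⁻ c, F₄ (a, b, c)) ^ (3⁻¹ : ℝ)
            = ∫⁻ a, (∫⁻ c, ∫⁻ d, F₂ (a, c, d)) ^ (3⁻¹ : ℝ) *
                (∫⁻ b, ∫⁻ d, F₃ (a, b, d)) ^ (3⁻¹ : ℝ) * (∫⁻ b, ∫⁻ c, F₄ (a, b, c)) ^ (3⁻¹ : ℝ) *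
                (∫⁻ b, ∫⁻ c, ∫⁻ d, F₁ (b, c, d)) ^ (3⁻¹ : ℝ) := by
              refine lintegral_congr fun a => by ring
          _ = (∫⁻ a, (∫⁻ c, ∫⁻ d, F₂ (a, c, d)) ^ (3⁻¹ : ℝ) *
                (∫⁻ b, ∫⁻ d, F₃ (a, b, d)) ^ (3⁻¹ : ℝ) *
                (∫⁻ b, ∫⁻ c, F₄ (a, b, c)) ^ (3⁻¹ : ℝ)) *
                (∫⁻ b, ∫⁻ c, ∫⁻ d, F₁ (b, c, d)) ^ (3⁻¹ : ℝ) := by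
              rw [lintegral_mul_const]
              exact ((hB₂.pow_const _).mul (hC₃.pow_const _)).mul (hC₄.pow_const _)
          _ ≤ ((∫⁻ a, ∫⁻ c, ∫⁻ d, F₂ (a, c, d)) ^ (3⁻¹ : ℝ) *
                (∫⁻ a, ∫⁻ b, ∫⁻ d, F₃ (a, b, d)) ^ (3⁻¹ : ℝ) *
                (∫⁻ a, ∫⁻ b, ∫⁻ c, F₄ (a, b, c)) ^ (3⁻¹ : ℝ)) *
                (∫⁻ b, ∫⁻ c, ∫⁻ d, F₁ (b, c, d)) ^ (3⁻¹ : ℝ) :=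
              mul_le_mul_left (holder3 volume hB₂ hC₃ hC₄) _
          _ = _ := by ring
    _ = (∫⁻ y, F₁ y) ^ (3⁻¹ : ℝ) * (∫⁻ y, F₂ y) ^ (3⁻¹ : ℝ) * (∫⁻ y, F₃ y) ^ (3⁻¹ : ℝ) *
          (∫⁻ y, F₄ y) ^ (3⁻¹ : ℝ) := by
        have e : ∀ (G : ℝ × ℝ × ℝ → ℝ≥0∞), Measurable G →
            (∫⁻ u, ∫⁻ v, ∫⁻ w, G (u, v, w)) = ∫⁻ y, G y := by
          intro G hG
          rw [Measure.volume_eq_prod, lintegral_prod _ hG.aemeasurable]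
          refine lintegral_congr fun u => ?_
          rw [Measure.volume_eq_prod, lintegral_prod _ (by fun_prop)]
        rw [e F₁ m₁, e F₂ m₂, e F₃ m₃, e F₄ m₄]

lemma mp_swap123 {α β γ : Type*} [MeasurableSpace α] [MeasurableSpace β] [MeasurableSpace γ]
    (μ : Measure α) (ν : Measure β) (ρ : Measure γ)
    [SigmaFinite μ] [SigmaFinite ν] [SigmaFinite ρ] :
    MeasurePreserving (fun p : α × β × γ => (p.2.1, (p.1, p.2.2)))
      (μ.prod (ν.prod ρ)) (ν.prod (μ.prod ρ)) := by
  have h1 : MeasurePreserving (MeasurableEquiv.prodAssoc.symm)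
      (μ.prod (ν.prod ρ)) ((μ.prod ν).prod ρ) :=
    (measurePreserving_prodAssoc μ ν ρ).symm _
  have h2 : MeasurePreserving (Prod.map Prod.swap id)
      ((μ.prod ν).prod ρ) ((ν.prod μ).prod ρ) :=
    (Measure.measurePreserving_swap (μ := μ) (ν := ν)).prod (MeasurePreserving.id ρ)
  have h3 := measurePreserving_prodAssoc ν μ ρ
  have h := h3.comp (h2.comp h1)
  have heq : (⇑MeasurableEquiv.prodAssoc ∘ Prod.map Prod.swap id ∘
      ⇑MeasurableEquiv.prodAssoc.symm) = fun p : α × β × γ => (p.2.1, (p.1, p.2.2)) := by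
    funext p; rfl
  rwa [heq] at h

/-- Degeneration of mixed-norm Hölder under independence: if each `gⱼ` on `ℝ⁴` is of the
form `fⱼ ∘ Pⱼ` where `Pⱼ` forgets the `xⱼ` coordinate, then for every `0 < p ≤ ∞`,
`‖g₁g₂g₃g₄‖_{L^p(ℝ⁴)} ≤ ∏ⱼ ‖fⱼ‖_{L^{3p}(ℝ³)}`. -/
theorem stmt12 (p : ℝ≥0∞) (hp : 0 < p)
    (f₁ f₂ f₃ f₄ : ℝ × ℝ × ℝ → ℂ)
    (h₁ : Measurable f₁) (h₂ : Measurable f₂) (h₃ : Measurable f₃) (h₄ : Measurable f₄) :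
    eLpNorm (fun x : ℝ × ℝ × ℝ × ℝ =>
        f₁ (x.2.1, x.2.2.1, x.2.2.2) * f₂ (x.1, x.2.2.1, x.2.2.2) *
          f₃ (x.1, x.2.1, x.2.2.2) * f₄ (x.1, x.2.1, x.2.2.1)) p volume
      ≤ eLpNorm f₁ (3 * p) volume * eLpNorm f₂ (3 * p) volume *
          eLpNorm f₃ (3 * p) volume * eLpNorm f₄ (3 * p) volume := by
  rcases eq_or_ne p ∞ with rfl | hpt
  · -- the case `p = ∞`
    have h3t : (3 : ℝ≥0∞) * ⊤ = ⊤ := by simp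
    rw [h3t]
    simp only [eLpNorm_exponent_top]
    have hq : Measure.QuasiMeasurePreserving (fun x : ℝ × ℝ × ℝ × ℝ => x.2) volume volume := by
      rw [Measure.volume_eq_prod]
      exact Measure.quasiMeasurePreserving_snd
    have key : ∀ (σ : ℝ × ℝ × ℝ × ℝ → ℝ × ℝ × ℝ × ℝ) (P : ℝ × ℝ × ℝ × ℝ → ℝ × ℝ × ℝ),
        MeasurePreserving σ volume volume → (∀ x, P x = (σ x).2) →
        ∀ f : ℝ × ℝ × ℝ → ℂ,
          ∀ᵐ x : ℝ × ℝ × ℝ × ℝ, (‖f (P x)‖₊ : ℝ≥0∞) ≤ eLpNormEssSup f volume := by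
      intro σ P hσ hP f
      have h := ae_le_eLpNormEssSup (f := f) (μ := (volume : Measure (ℝ × ℝ × ℝ)))
      have h2 := (hq.comp hσ.quasiMeasurePreserving).ae h
      filter_upwards [h2] with x hx
      rw [hP x]
      exact hx
    have k₁ := key id (fun x => (x.2.1, x.2.2.1, x.2.2.2)) (MeasurePreserving.id _)
      (fun x => rfl) f₁
    have k₂ := key _ (fun x => (x.1, x.2.2.1, x.2.2.2))
      (mp_swap123 volume volume volume) (fun x => rfl) f₂
    have k₃ := key _ (fun x => (x.1, x.2.1, x.2.2.2))
      ((mp_swap123 volume volume volume).comp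
        ((MeasurePreserving.id volume).prod (mp_swap123 volume volume volume)))
      (fun x => rfl) f₃
    have k₄ := key _ (fun x => (x.1, x.2.1, x.2.2.1))
      ((mp_swap123 volume volume volume).comp
        ((MeasurePreserving.id volume).prod
          ((mp_swap123 volume volume volume).comp
            ((MeasurePreserving.id volume).prod
              (Measure.measurePreserving_swap (μ := volume) (ν := volume))))))
      (fun x => rfl) f₄
    refine essSup_le_of_ae_le _ ?_
    filter_upwards [k₁, k₂, k₃, k₄] with x hx1 hx2 hx3 hx4
    calc (‖f₁ (x.2.1, x.2.2.1, x.2.2.2) * f₂ (x.1, x.2.2.1, x.2.2.2) *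
            f₃ (x.1, x.2.1, x.2.2.2) * f₄ (x.1, x.2.1, x.2.2.1)‖₊ : ℝ≥0∞)
        = (‖f₁ (x.2.1, x.2.2.1, x.2.2.2)‖₊ : ℝ≥0∞) * ‖f₂ (x.1, x.2.2.1, x.2.2.2)‖₊ *
            ‖f₃ (x.1, x.2.1, x.2.2.2)‖₊ * ‖f₄ (x.1, x.2.1, x.2.2.1)‖₊ := by
          simp [nnnorm_mul]
      _ ≤ _ := mul_le_mul' (mul_le_mul' (mul_le_mul' hx1 hx2) hx3) hx4
  · -- the case `p < ∞`
    have h0 : p ≠ 0 := hp.ne'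
    have hr : 0 < p.toReal := ENNReal.toReal_pos h0 hpt
    set r := p.toReal with hrdef
    have h3p0 : (3 : ℝ≥0∞) * p ≠ 0 := mul_ne_zero (by norm_num) h0
    have h3pt : (3 : ℝ≥0∞) * p ≠ ∞ := ENNReal.mul_ne_top (by norm_num) hpt
    have htr : ((3 : ℝ≥0∞) * p).toReal = 3 * r := by
      rw [ENNReal.toReal_mul, ← hrdef]; norm_num
    rw [eLpNorm_eq_lintegral_rpow_enorm_toReal h0 hpt,
      eLpNorm_eq_lintegral_rpow_enorm_toReal h3p0 h3pt, eLpNorm_eq_lintegral_rpow_enorm_toReal h3p0 h3pt,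
      eLpNorm_eq_lintegral_rpow_enorm_toReal h3p0 h3pt, eLpNorm_eq_lintegral_rpow_enorm_toReal h3p0 h3pt,
      htr]
    have hpow : ∀ z : ℂ, ((‖z‖₊ : ℝ≥0∞) ^ (3 * r)) ^ (3⁻¹ : ℝ) = (‖z‖₊ : ℝ≥0∞) ^ r := by
      intro z
      rw [← ENNReal.rpow_mul, show 3 * r * (3⁻¹ : ℝ) = r by ring]
    calc
      (∫⁻ x : ℝ × ℝ × ℝ × ℝ, (‖f₁ (x.2.1, x.2.2.1, x.2.2.2) * f₂ (x.1, x.2.2.1, x.2.2.2) *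
            f₃ (x.1, x.2.1, x.2.2.2) * f₄ (x.1, x.2.1, x.2.2.1)‖₊ : ℝ≥0∞) ^ r) ^ (1 / r)
        = (∫⁻ x : ℝ × ℝ × ℝ × ℝ,
            ((‖f₁ (x.2.1, x.2.2.1, x.2.2.2)‖₊ : ℝ≥0∞) ^ (3 * r)) ^ (3⁻¹ : ℝ) *
              ((‖f₂ (x.1, x.2.2.1, x.2.2.2)‖₊ : ℝ≥0∞) ^ (3 * r)) ^ (3⁻¹ : ℝ) *
              ((‖f₃ (x.1, x.2.1, x.2.2.2)‖₊ : ℝ≥0∞) ^ (3 * r)) ^ (3⁻¹ : ℝ) *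
              ((‖f₄ (x.1, x.2.1, x.2.2.1)‖₊ : ℝ≥0∞) ^ (3 * r)) ^ (3⁻¹ : ℝ)) ^ (1 / r) := by
          congr 1
          refine lintegral_congr fun x => ?_
          rw [hpow, hpow, hpow, hpow, nnnorm_mul, nnnorm_mul, nnnorm_mul, ENNReal.coe_mul,
            ENNReal.coe_mul, ENNReal.coe_mul, ENNReal.mul_rpow_of_nonneg _ _ hr.le,
            ENNReal.mul_rpow_of_nonneg _ _ hr.le, ENNReal.mul_rpow_of_nonneg _ _ hr.le]
      _ ≤ ((∫⁻ y, (‖f₁ y‖₊ : ℝ≥0∞) ^ (3 * r)) ^ (3⁻¹ : ℝ) *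
            (∫⁻ y, (‖f₂ y‖₊ : ℝ≥0∞) ^ (3 * r)) ^ (3⁻¹ : ℝ) *
            (∫⁻ y, (‖f₃ y‖₊ : ℝ≥0∞) ^ (3 * r)) ^ (3⁻¹ : ℝ) *
            (∫⁻ y, (‖f₄ y‖₊ : ℝ≥0∞) ^ (3 * r)) ^ (3⁻¹ : ℝ)) ^ (1 / r) := by
          refine ENNReal.rpow_le_rpow ?_ (by positivity)
          exact lw4 (F₁ := fun y => (‖f₁ y‖₊ : ℝ≥0∞) ^ (3 * r))
            (F₂ := fun y => (‖f₂ y‖₊ : ℝ≥0∞) ^ (3 * r))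
            (F₃ := fun y => (‖f₃ y‖₊ : ℝ≥0∞) ^ (3 * r))
            (F₄ := fun y => (‖f₄ y‖₊ : ℝ≥0∞) ^ (3 * r))
            (by fun_prop) (by fun_prop) (by fun_prop) (by fun_prop)
      _ = (∫⁻ y, (‖f₁ y‖₊ : ℝ≥0∞) ^ (3 * r)) ^ (1 / (3 * r)) *
            (∫⁻ y, (‖f₂ y‖₊ : ℝ≥0∞) ^ (3 * r)) ^ (1 / (3 * r)) *
            (∫⁻ y, (‖f₃ y‖₊ : ℝ≥0∞) ^ (3 * r)) ^ (1 / (3 * r)) *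
            (∫⁻ y, (‖f₄ y‖₊ : ℝ≥0∞) ^ (3 * r)) ^ (1 / (3 * r)) := by
          rw [ENNReal.mul_rpow_of_nonneg _ _ (by positivity),
            ENNReal.mul_rpow_of_nonneg _ _ (by positivity),
            ENNReal.mul_rpow_of_nonneg _ _ (by positivity),
            ← ENNReal.rpow_mul, ← ENNReal.rpow_mul, ← ENNReal.rpow_mul, ← ENNReal.rpow_mul,
            show (3⁻¹ : ℝ) * (1 / r) = 1 / (3 * r) by
              field_simp]
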